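/- Let M be a kG-module with non-degenerate G-invariant symmetric form B and adjoint σ, H ≤ G, and θ a σ-invariant unit of E_G(M). If θ = tr_H^G(α) for some σ-invariant α ∈ E_H(M), then the map m ↦ Σ_{g ∈ G/H} g ⊗ α(g⁻¹m) is a kG-linear isometry from (M, B_θ) into the induced symmetric module Ind_H^G(α M, B̂_α). Conversely, if (M, B_θ) admits a kG-linear isometric embedding into some induced symmetric module Ind_H^G(L, B₁), then θ = tr_H^G(α) for some σ-invariant α ∈ E_H(M). -/

import Mathlib

/-!
Forward: by `G`-invariance of `B`, `B (θ m₁) m₂ = Σ_{g ∈ G/H} B (α (g⁻¹ m₁)) (g⁻¹ m₂)`, which is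
the induced form `B̂_α^G` evaluated on the images, and injectivity follows from that of `θ`.
Converse: evaluation at `1` turns the embedding `Ψ` into an `H`-map `M → L`, along which `B₁`
pulls back to an `H`-invariant symmetric form on `M`; its `B`-representative `α` is
`H`-equivariant and `σ`-invariant, and the isometry condition, unfolded through
`Ψ m g = Ψ (g⁻¹ m) 1`, says exactly `θ = tr_H^G α`.
-/

/-- Membership condition describing the induced module `Ind_H^G L` inside `G → L`. -/
def IndCond9 {k G L : Type*} [Field k] [Group G] [AddCommGroup L] [Module k L]
    (H : Subgroup G) (ρL : Representation k H L) (f : G → L) : Prop :=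
  ∀ (h : H) (g : G), f (g * (h : G)) = ρL h⁻¹ (f g)

open LinearMap (BilinForm)

lemma LinearMap.SeparatingLeft.injective {k M N : Type*} [CommRing k] [AddCommGroup M]
    [Module k M] [AddCommGroup N] [Module k N] {B : M →ₗ[k] N →ₗ[k] k}
    (hB : B.SeparatingLeft) : Function.Injective B :=
  LinearMap.ker_eq_bot.mp (LinearMap.separatingLeft_iff_ker_eq_bot.mp hB)

lemma adjoint_eq_self_of_represents_symm {k M : Type*} [CommRing k] [AddCommGroup M] [Module k M]
    {B C : M →ₗ[k] M →ₗ[k] k} {σ : Module.End k M → Module.End k M} {α : Module.End k M}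
    (hB : B.SeparatingLeft) (hBsymm : ∀ m n, B m n = B n m)
    (hσ : ∀ f m n, B m (f n) = B (σ f m) n) (hCsymm : ∀ m n, C m n = C n m)
    (hα : ∀ m n, B (α m) n = C m n) : σ α = α := by
  ext m
  refine hB.injective (LinearMap.ext fun n => ?_)
  calc B (σ α m) n = B (α n) m := by rw [← hσ, hBsymm]
    _ = B (α m) n := by rw [hα, hα, hCsymm]

namespace Representation

section CommRing

variable {k G M : Type*} [CommRing k] [Group G] [AddCommGroup M] [Module k M]
  (ρ : Representation k G M)

noncomputable def relTrace (H : Subgroup G) [Fintype (G ⧸ H)] (α : Module.End k M) :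
    Module.End k M :=
  ∑ c : G ⧸ H, (ρ (Quotient.out c) : M →ₗ[k] M) ∘ₗ α ∘ₗ (ρ (Quotient.out c)⁻¹ : M →ₗ[k] M)

variable {ρ} {B C : M →ₗ[k] M →ₗ[k] k}

lemma form_apply_left_eq_of_invariant (hinv : ∀ g m₁ m₂, B (ρ g m₁) (ρ g m₂) = B m₁ m₂)
    (g : G) (m₁ m₂ : M) : B (ρ g m₁) m₂ = B m₁ (ρ g⁻¹ m₂) := by
  rw [← hinv g m₁ (ρ g⁻¹ m₂), ← Module.End.mul_apply, ← map_mul, mul_inv_cancel, map_one,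
    Module.End.one_apply]

lemma relTrace_apply_left (hinv : ∀ g m₁ m₂, B (ρ g m₁) (ρ g m₂) = B m₁ m₂)
    (H : Subgroup G) [Fintype (G ⧸ H)] (α : Module.End k M) (m₁ m₂ : M) :
    B (ρ.relTrace H α m₁) m₂ =
      ∑ c : G ⧸ H, B (α (ρ (Quotient.out c)⁻¹ m₁)) (ρ (Quotient.out c)⁻¹ m₂) := by
  simp only [relTrace, LinearMap.sum_apply, LinearMap.comp_apply, map_sum,
    form_apply_left_eq_of_invariant hinv]

lemma injective_of_injective_relTrace {H : Subgroup G} [Fintype (G ⧸ H)] {α : Module.End k M}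
    (hα : Function.Injective (ρ.relTrace H α)) :
    Function.Injective fun m : M => fun x : G => α (ρ x⁻¹ m) := by
  intro m₁ m₂ h
  apply hα
  simp only [relTrace, LinearMap.sum_apply, LinearMap.comp_apply]
  exact Finset.sum_congr rfl fun c _ => congrArg _ (congrFun h (Quotient.out c))

lemma comp_eq_of_represents {K : Type*} [Group K] {π : Representation k K M} {α : Module.End k M}
    (hB : B.SeparatingLeft) (hBinv : ∀ g m₁ m₂, B (π g m₁) (π g m₂) = B m₁ m₂)
    (hCinv : ∀ g m₁ m₂, C (π g m₁) (π g m₂) = C m₁ m₂) (hα : ∀ m n, B (α m) n = C m n)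
    (g : K) : α ∘ₗ (π g : M →ₗ[k] M) = (π g : M →ₗ[k] M) ∘ₗ α := by
  ext m
  refine hB.injective (LinearMap.ext fun n => ?_)
  calc B (α (π g m)) n = C (π g m) n := hα _ _
    _ = C m (π g⁻¹ n) := form_apply_left_eq_of_invariant hCinv g m n
    _ = B (π g (α m)) n := by rw [← hα, form_apply_left_eq_of_invariant hBinv]

end CommRing

section Induced

variable {k G M L : Type*} [Field k] [Group G] [AddCommGroup M] [Module k M]
  [AddCommGroup L] [Module k L] {ρ : Representation k G M} {H : Subgroup G}
  {ρL : Representation k H L} {Ψ : M →ₗ[k] (G → L)}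

lemma indCond_of_comp_eq {α : Module.End k M}
    (hα : ∀ h : H, α ∘ₗ (ρ (h : G) : M →ₗ[k] M) = (ρ (h : G) : M →ₗ[k] M) ∘ₗ α) (m : M) :
    IndCond9 H (ρ.comp H.subtype) fun x : G => α (ρ x⁻¹ m) := by
  intro h g
  have := LinearMap.congr_fun (hα h⁻¹) (ρ g⁻¹ m)
  simpa [mul_inv_rev, map_mul] using this

lemma apply_eq_apply_one_of_equivariant (hequiv : ∀ g m x, Ψ (ρ g m) x = Ψ m (g⁻¹ * x))
    (g : G) (m : M) : Ψ m g = Ψ (ρ g⁻¹ m) 1 := by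
  rw [hequiv, inv_inv, mul_one]

lemma apply_one_rep_of_equivariant (hind : ∀ m, IndCond9 H ρL (Ψ m))
    (hequiv : ∀ g m x, Ψ (ρ g m) x = Ψ m (g⁻¹ * x)) (h : H) (m : M) :
    Ψ (ρ h m) 1 = ρL h (Ψ m 1) := by
  simpa [hequiv] using hind m h⁻¹ 1

noncomputable def evalOneForm (Ψ : M →ₗ[k] (G → L)) (B₁ : L →ₗ[k] L →ₗ[k] k) :
    M →ₗ[k] M →ₗ[k] k :=
  B₁.compl₁₂ (LinearMap.proj 1 ∘ₗ Ψ) (LinearMap.proj 1 ∘ₗ Ψ)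

lemma evalOneForm_apply (B₁ : L →ₗ[k] L →ₗ[k] k) (m n : M) :
    evalOneForm Ψ B₁ m n = B₁ (Ψ m 1) (Ψ n 1) :=
  rfl

lemma evalOneForm_invariant {B₁ : L →ₗ[k] L →ₗ[k] k}
    (hB₁ : ∀ h l₁ l₂, B₁ (ρL h l₁) (ρL h l₂) = B₁ l₁ l₂) (hind : ∀ m, IndCond9 H ρL (Ψ m))
    (hequiv : ∀ g m x, Ψ (ρ g m) x = Ψ m (g⁻¹ * x)) (h : H) (m n : M) :
    evalOneForm Ψ B₁ (ρ.comp H.subtype h m) (ρ.comp H.subtype h n) = evalOneForm Ψ B₁ m n := by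
  simp only [evalOneForm_apply, MonoidHom.comp_apply, Subgroup.coe_subtype,
    apply_one_rep_of_equivariant hind hequiv, hB₁]

lemma sum_evalOneForm_eq_sum_apply [Fintype (G ⧸ H)] (B₁ : L →ₗ[k] L →ₗ[k] k)
    (hequiv : ∀ g m x, Ψ (ρ g m) x = Ψ m (g⁻¹ * x)) (m n : M) :
    ∑ c : G ⧸ H, evalOneForm Ψ B₁ (ρ (Quotient.out c)⁻¹ m) (ρ (Quotient.out c)⁻¹ n) =
      ∑ c : G ⧸ H, B₁ (Ψ m (Quotient.out c)) (Ψ n (Quotient.out c)) := by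
  simp only [evalOneForm_apply, ← apply_eq_apply_one_of_equivariant hequiv]

end Induced

end Representation

theorem stmt9_general {k G M L : Type*} [Field k] [Group G]
    [AddCommGroup M] [Module k M] [FiniteDimensional k M]
    [AddCommGroup L] [Module k L]
    (H : Subgroup G) [Fintype (G ⧸ H)]
    (ρ : Representation k G M)
    (B : M →ₗ[k] M →ₗ[k] k)
    (hsymm : ∀ m₁ m₂ : M, B m₁ m₂ = B m₂ m₁)
    (hnd : ∀ m : M, (∀ m' : M, B m m' = 0) → m = 0)
    (hinv : ∀ (g : G) (m₁ m₂ : M), B (ρ g m₁) (ρ g m₂) = B m₁ m₂)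
    (σ : (M →ₗ[k] M) → (M →ₗ[k] M))
    (hσ : ∀ (f : M →ₗ[k] M) (m₁ m₂ : M), B m₁ (f m₂) = B (σ f m₁) m₂)
    (θ : M →ₗ[k] M)
    (hθunit : Function.Bijective θ) :
    -- forward direction
    (∀ α : M →ₗ[k] M,
      (∀ h : H, α ∘ₗ (ρ (h : G) : M →ₗ[k] M) = (ρ (h : G) : M →ₗ[k] M) ∘ₗ α) →
      σ α = α →
      θ = ∑ c : G ⧸ H,
        (ρ (Quotient.out c) : M →ₗ[k] M) ∘ₗ α ∘ₗ (ρ (Quotient.out c)⁻¹ : M →ₗ[k] M) →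
      -- Φ m := fun x => α (ρ x⁻¹ m) lands in the induced module on α M ...
      (∀ m : M, IndCond9 H (MonoidHom.comp ρ H.subtype) (fun x : G => α (ρ x⁻¹ m))) ∧
      (∀ (m : M) (x : G), α (ρ x⁻¹ m) ∈ LinearMap.range α) ∧
      -- ... is kG-linear ...
      (∀ (g : G) (m : M) (x : G), α (ρ x⁻¹ (ρ g m)) = α (ρ (g⁻¹ * x)⁻¹ m)) ∧
      (Function.Injective fun m : M => fun x : G => α (ρ x⁻¹ m)) ∧
      -- ... and is an isometry from (M, B_θ) onto its image with the induced form B̂_α^G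
      (∀ m₁ m₂ : M,
        ∑ c : G ⧸ H, B (α (ρ (Quotient.out c)⁻¹ m₁)) (ρ (Quotient.out c)⁻¹ m₂) =
          B (θ m₁) m₂)) ∧
    -- converse direction
    (∀ (ρL : Representation k H L) (B₁ : L →ₗ[k] L →ₗ[k] k),
      (∀ l₁ l₂ : L, B₁ l₁ l₂ = B₁ l₂ l₁) →
      (∀ l : L, (∀ l' : L, B₁ l l' = 0) → l = 0) →
      (∀ (h : H) (l₁ l₂ : L), B₁ (ρL h l₁) (ρL h l₂) = B₁ l₁ l₂) →
      ∀ Ψ : M →ₗ[k] (G → L),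
        (∀ m : M, IndCond9 H ρL (Ψ m)) →
        (∀ (g : G) (m : M) (x : G), Ψ (ρ g m) x = Ψ m (g⁻¹ * x)) →
        Function.Injective Ψ →
        (∀ m₁ m₂ : M,
          ∑ c : G ⧸ H, B₁ (Ψ m₁ (Quotient.out c)) (Ψ m₂ (Quotient.out c)) =
            B (θ m₁) m₂) →
        ∃ α : M →ₗ[k] M,
          (∀ h : H, α ∘ₗ (ρ (h : G) : M →ₗ[k] M) = (ρ (h : G) : M →ₗ[k] M) ∘ₗ α) ∧
          σ α = α ∧
          θ = ∑ c : G ⧸ H,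
            (ρ (Quotient.out c) : M →ₗ[k] M) ∘ₗ α ∘ₗ (ρ (Quotient.out c)⁻¹ : M →ₗ[k] M)) := by
  open Representation in
  have hB : B.SeparatingLeft := hnd
  refine ⟨fun α hα _ hθ => ?_, fun ρL B₁ hB₁symm _ hB₁inv Ψ hind hequiv _ hiso => ?_⟩
  · refine ⟨indCond_of_comp_eq hα, fun m x => ⟨ρ x⁻¹ m, rfl⟩, fun g m x => ?_,
      injective_of_injective_relTrace (hθ ▸ hθunit.injective),
      fun m₁ m₂ => by rw [hθ, ← relTrace_apply_left hinv]; rfl⟩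
    rw [mul_inv_rev, inv_inv, map_mul, Module.End.mul_apply]
  · obtain ⟨α, hC⟩ : ∃ α : Module.End k M, ∀ m n, B (α m) n = evalOneForm Ψ B₁ m n :=
      ⟨_, fun m n => BilinForm.symmCompOfNondegenerate_left_apply _
        (BilinForm.Nondegenerate.ofSeparatingLeft hB) n m⟩
    refine ⟨α, comp_eq_of_represents (π := ρ.comp H.subtype) hB (fun h => hinv h)
        (evalOneForm_invariant hB₁inv hind hequiv) hC,
      adjoint_eq_self_of_represents_symm hB hsymm hσ (fun m n => hB₁symm _ _) hC, ?_⟩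
    ext m
    refine hB.injective (LinearMap.ext fun n => ?_)
    change B (θ m) n = B (ρ.relTrace H α m) n
    simp only [relTrace_apply_left hinv, ← hiso, ← sum_evalOneForm_eq_sum_apply B₁ hequiv, hC]

/-- Symmetric analogue of Higman's criterion. Forward: if `θ = tr_H^G α` with `α` a
`σ`-invariant `H`-endomorphism, then `m ↦ (x ↦ α (ρ x⁻¹ m))` is a `kG`-linear isometry
from `(M, B_θ)` into `Ind_H^G (α M, B̂_α)`. Converse: an isometric `kG`-embedding of
`(M, B_θ)` into an induced symmetric module `Ind_H^G (L, B₁)` yields such an `α`. -/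
theorem stmt9 {k G M L : Type*} [Field k] [Group G] [Fintype G]
    [AddCommGroup M] [Module k M] [FiniteDimensional k M]
    [AddCommGroup L] [Module k L] [FiniteDimensional k L]
    (H : Subgroup G) [Fintype (G ⧸ H)]
    (ρ : Representation k G M)
    (B : M →ₗ[k] M →ₗ[k] k)
    (hsymm : ∀ m₁ m₂ : M, B m₁ m₂ = B m₂ m₁)
    (hnd : ∀ m : M, (∀ m' : M, B m m' = 0) → m = 0)
    (hinv : ∀ (g : G) (m₁ m₂ : M), B (ρ g m₁) (ρ g m₂) = B m₁ m₂)
    (σ : (M →ₗ[k] M) → (M →ₗ[k] M))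
    (hσ : ∀ (f : M →ₗ[k] M) (m₁ m₂ : M), B m₁ (f m₂) = B (σ f m₁) m₂)
    (θ : M →ₗ[k] M)
    (hθG : ∀ g : G, θ ∘ₗ (ρ g : M →ₗ[k] M) = (ρ g : M →ₗ[k] M) ∘ₗ θ)
    (hθσ : σ θ = θ)
    (hθunit : Function.Bijective θ) :
    -- forward direction
    (∀ α : M →ₗ[k] M,
      (∀ h : H, α ∘ₗ (ρ (h : G) : M →ₗ[k] M) = (ρ (h : G) : M →ₗ[k] M) ∘ₗ α) →
      σ α = α →
      θ = ∑ c : G ⧸ H,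
        (ρ (Quotient.out c) : M →ₗ[k] M) ∘ₗ α ∘ₗ (ρ (Quotient.out c)⁻¹ : M →ₗ[k] M) →
      -- Φ m := fun x => α (ρ x⁻¹ m) lands in the induced module on α M ...
      (∀ m : M, IndCond9 H (MonoidHom.comp ρ H.subtype) (fun x : G => α (ρ x⁻¹ m))) ∧
      (∀ (m : M) (x : G), α (ρ x⁻¹ m) ∈ LinearMap.range α) ∧
      -- ... is kG-linear ...
      (∀ (g : G) (m : M) (x : G), α (ρ x⁻¹ (ρ g m)) = α (ρ (g⁻¹ * x)⁻¹ m)) ∧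
      (Function.Injective fun m : M => fun x : G => α (ρ x⁻¹ m)) ∧
      -- ... and is an isometry from (M, B_θ) onto its image with the induced form B̂_α^G
      (∀ m₁ m₂ : M,
        ∑ c : G ⧸ H, B (α (ρ (Quotient.out c)⁻¹ m₁)) (ρ (Quotient.out c)⁻¹ m₂) =
          B (θ m₁) m₂)) ∧
    -- converse direction
    (∀ (ρL : Representation k H L) (B₁ : L →ₗ[k] L →ₗ[k] k),
      (∀ l₁ l₂ : L, B₁ l₁ l₂ = B₁ l₂ l₁) →
      (∀ l : L, (∀ l' : L, B₁ l l' = 0) → l = 0) →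
      (∀ (h : H) (l₁ l₂ : L), B₁ (ρL h l₁) (ρL h l₂) = B₁ l₁ l₂) →
      ∀ Ψ : M →ₗ[k] (G → L),
        (∀ m : M, IndCond9 H ρL (Ψ m)) →
        (∀ (g : G) (m : M) (x : G), Ψ (ρ g m) x = Ψ m (g⁻¹ * x)) →
        Function.Injective Ψ →
        (∀ m₁ m₂ : M,
          ∑ c : G ⧸ H, B₁ (Ψ m₁ (Quotient.out c)) (Ψ m₂ (Quotient.out c)) =
            B (θ m₁) m₂) →
        ∃ α : M →ₗ[k] M,
          (∀ h : H, α ∘ₗ (ρ (h : G) : M →ₗ[k] M) = (ρ (h : G) : M →ₗ[k] M) ∘ₗ α) ∧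
          σ α = α ∧
          θ = ∑ c : G ⧸ H,
            (ρ (Quotient.out c) : M →ₗ[k] M) ∘ₗ α ∘ₗ (ρ (Quotient.out c)⁻¹ : M →ₗ[k] M)) :=
  stmt9_general H ρ B hsymm hnd hinv σ hσ θ hθunit
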